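/- Let M₁, M₂ be perfect matchings of K_{2m}, let l be the number of connected components of M₁ ∪ M₂, and let e be an edge of K_{2m} not in M₁. Then exactly one of the following holds: (1) d(M₁*e, M₂) = d(M₁,M₂) + 1, which happens if and only if the two endpoints of e belong to two different components of M₁ ∪ M₂; (2) d(M₁*e, M₂) = d(M₁,M₂) - 1, which happens if and only if both endpoints of e belong to the same component of M₁ ∪ M₂ and (M₁*e) ∪ M₂ has l+1 components; (3) d(M₁*e, M₂) = d(M₁,M₂), which happens if and only if both endpoints of e belong to the same component of M₁ ∪ M₂ and (M₁*e) ∪ M₂ has l components. -/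

import Mathlib

/-!
Write `c(G)` for the number of connected components of `G`. In `𝒫ₘ` the neighbours of `M` are
exactly the insertions `M * e`, and `d(M, N) = c(N) - c(M ∪ N)`: an insertion changes
`c(· ∪ N)` by at most one, and if `M ≠ N`, inserting the `N`-edge at a vertex where `M` and `N`
differ raises it by exactly one.

For `e = v₁v₂` with old partners `v₃, v₄`, the graphs `(M ∪ N) + v₁v₂ + v₃v₄` and
`(M * e ∪ N) + v₁v₃ + v₂v₄` coincide, and in both the second added edge closes a path through
the first. Hence `c(M ∪ N) - [v₁ ≁ v₂ in M ∪ N] = c(M * e ∪ N) - [v₁ ≁ v₃ in M * e ∪ N]`.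
If `v₁ ≁ v₂` in `M ∪ N` then `v₁ ∼ v₃` in `M * e ∪ N` by parity: otherwise the vertices reachable
from `v₁` in both graphs form a set closed under `N`-partners, while removing `v₁` leaves a set
closed under `M`-partners, and both cannot have even size.
-/

open SimpleGraph

/-- A simple graph on `Fin n` is a perfect matching if every vertex is
incident with exactly one edge, i.e. has a unique neighbor. -/
def IsPerfMatching {n : ℕ} (M : SimpleGraph (Fin n)) : Prop :=
  ∀ v, ∃! w, M.Adj v w

/-- A simple graph is (i.e. its edges form) a single cycle of length `n`:
there is a cycle of length `n` passing through all of its edges. -/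
def IsCycleGraphOfLength {V : Type*} (G : SimpleGraph V) (n : ℕ) : Prop :=
  ∃ (v : V) (p : G.Walk v v), p.IsCycle ∧ p.length = n ∧ ∀ e ∈ G.edgeSet, e ∈ p.edges

/-- Two perfect matchings are adjacent in the matching graph `𝒫ₘ` iff they are
distinct and their symmetric difference is a cycle of length four. -/
def MatchAdj {n : ℕ} (M₁ M₂ : SimpleGraph (Fin n)) : Prop :=
  M₁ ≠ M₂ ∧ IsCycleGraphOfLength (symmDiff M₁ M₂) 4

/-- Vertices of the graph `𝒫ₘ`: all perfect matchings of `K_{2m}`. -/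
abbrev PMVertex (m : ℕ) := {M : SimpleGraph (Fin (2 * m)) // IsPerfMatching M}

/-- The graph `𝒫ₘ` of perfect matchings of `K_{2m}`. -/
def matchingGraph (m : ℕ) : SimpleGraph (PMVertex m) where
  Adj M₁ M₂ := MatchAdj M₁.1 M₂.1
  symm := ⟨by
    rintro M₁ M₂ ⟨hne, hc⟩
    exact ⟨hne.symm, by rwa [symmDiff_comm]⟩⟩
  loopless := ⟨fun M h => h.1 rfl⟩

/-- The number of geodesics (shortest paths) between two vertices of a graph. -/
noncomputable def geodesicCount {V : Type*} (G : SimpleGraph V) (u v : V) : ℕ :=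
  Nat.card {p : G.Walk u v // p.IsPath ∧ p.length = G.dist u v}
/-- The unique neighbor of `v` in a (perfect) matching `M`
(junk value `v` itself if `v` has no neighbor). -/
noncomputable def matchOf {V : Type*} (M : SimpleGraph V) (v : V) : V := by
  classical
  exact if h : ∃ w, M.Adj v w then h.choose else v

/-- Insertion `M * e` of an edge `e = {v₁, v₂}` into a perfect matching `M`:
if `e ∈ M` then `M * e = M`; otherwise the edges `{v₁, v₃}` and `{v₂, v₄}` of `M`
incident with `v₁` and `v₂` are deleted and the edges `{v₁, v₂}` and `{v₃, v₄}`
are added. -/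
noncomputable def insertEdge {V : Type*} (M : SimpleGraph V) (e : Sym2 V) : SimpleGraph V := by
  classical
  exact if e ∈ M.edgeSet then M
  else SimpleGraph.fromEdgeSet
    ({f | f ∈ M.edgeSet ∧ ∀ v ∈ e, v ∉ f} ∪ {e, Sym2.map (matchOf M) e})

/-- Iterated insertion `M * (e₁, …, eₙ) = (M * (e₁, …, eₙ₋₁)) * eₙ`. -/
noncomputable def insertEdges {V : Type*} (M : SimpleGraph V) (l : List (Sym2 V)) :
    SimpleGraph V :=
  l.foldl insertEdge M

namespace SimpleGraph

variable {V : Type*} {G : SimpleGraph V} {u v x y : V}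

lemma Reachable.mem_of_forall_adj {S : Set V} (hS : ∀ a b, G.Adj a b → a ∈ S → b ∈ S)
    (h : G.Reachable u v) (hu : u ∈ S) : v ∈ S := by
  rw [reachable_iff_reflTransGen] at h
  induction h with
  | refl => exact hu
  | tail _ hbc ih => exact hS _ _ hbc ih

lemma symmDiff_adj {H : SimpleGraph V} :
    (symmDiff G H).Adj x y ↔ G.Adj x y ∧ ¬H.Adj x y ∨ H.Adj x y ∧ ¬G.Adj x y := by
  rw [symmDiff_def, sup_adj, sdiff_adj, sdiff_adj]

lemma reachable_sup_edge (u v : V) : (G ⊔ edge u v).Reachable u v := by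
  obtain rfl | huv := eq_or_ne u v
  · rfl
  · exact Adj.reachable (Or.inr ((edge_adj ..).2 ⟨Or.inl ⟨rfl, rfl⟩, huv⟩))

lemma Reachable.of_sup_edge (hxu : ¬G.Reachable x u) (hxv : ¬G.Reachable x v)
    (h : (G ⊔ edge u v).Reachable x y) : G.Reachable x y := by
  refine h.mem_of_forall_adj (S := {z | G.Reachable x z}) ?_ (Reachable.refl x)
  rintro a b (hab | hab) (hxa : G.Reachable x a)
  · exact hxa.trans hab.reachable
  · rw [edge_adj] at hab
    rcases hab with ⟨⟨rfl, -⟩ | ⟨rfl, -⟩, -⟩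
    exacts [absurd hxa hxu, absurd hxa hxv]

lemma Reachable.of_sup_edge_of_reachable (h : (G ⊔ edge u v).Reachable x y)
    (huv : G.Reachable u v) : G.Reachable x y := by
  by_cases hx : G.Reachable x u
  · by_cases hy : G.Reachable y u
    · exact hx.trans hy.symm
    · exact (h.symm.of_sup_edge hy fun hyv => hy (hyv.trans huv.symm)).symm
  · exact h.of_sup_edge hx fun hxv => hx (hxv.trans huv.symm)

lemma card_connectedComponent_sup_edge_of_reachable (huv : G.Reachable u v) :
    Nat.card (G ⊔ edge u v).ConnectedComponent = Nat.card G.ConnectedComponent := by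
  refine (Nat.card_eq_of_bijective _ ⟨?_, ConnectedComponent.surjective_map_ofLE
    (le_sup_left : G ≤ G ⊔ edge u v)⟩).symm
  rintro ⟨a⟩ ⟨b⟩ hab
  exact ConnectedComponent.sound
    ((ConnectedComponent.exact hab).of_sup_edge_of_reachable huv)

lemma card_connectedComponent_sup_edge_sup_edge {p q r s : V} (hpr : G.Reachable p r)
    (hqs : G.Reachable q s) :
    Nat.card (G ⊔ edge p q ⊔ edge r s).ConnectedComponent =
      Nat.card (G ⊔ edge p q).ConnectedComponent :=
  card_connectedComponent_sup_edge_of_reachable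
    ((hpr.mono le_sup_left).symm.trans ((reachable_sup_edge p q).trans (hqs.mono le_sup_left)))

section Finite

variable [Finite V]

lemma card_connectedComponent_sup_edge_add_one (huv : ¬G.Reachable u v) :
    Nat.card (G ⊔ edge u v).ConnectedComponent + 1 = Nat.card G.ConnectedComponent := by
  classical
  let φ : {c : G.ConnectedComponent // c ≠ G.connectedComponentMk u} →
      (G ⊔ edge u v).ConnectedComponent :=
    fun c => c.1.map (Hom.ofLE le_sup_left)
  have hφ : φ.Bijective := by
    refine ⟨?_, ?_⟩
    · rintro ⟨⟨a⟩, ha⟩ ⟨⟨b⟩, hb⟩ hab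
      have hau : ¬G.Reachable a u := fun h => ha (ConnectedComponent.sound h)
      have hbu : ¬G.Reachable b u := fun h => hb (ConnectedComponent.sound h)
      have hab' : (G ⊔ edge u v).Reachable a b := ConnectedComponent.exact hab
      refine Subtype.ext (ConnectedComponent.sound ?_)
      by_cases hav : G.Reachable a v
      · by_cases hbv : G.Reachable b v
        · exact hav.trans hbv.symm
        · exact (hab'.symm.of_sup_edge hbu hbv).symm
      · exact hab'.of_sup_edge hau hav
    · rintro ⟨a⟩
      by_cases hau : G.Reachable a u
      · refine ⟨⟨G.connectedComponentMk v, fun h => huv (ConnectedComponent.exact h).symm⟩, ?_⟩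
        exact ConnectedComponent.sound
          ((reachable_sup_edge u v).symm.trans ((hau.mono le_sup_left).symm))
      · exact ⟨⟨G.connectedComponentMk a, fun h => hau (ConnectedComponent.exact h)⟩, rfl⟩
  rw [← Nat.card_eq_of_bijective φ hφ, ← Finite.card_option,
    Nat.card_congr (Equiv.optionSubtypeNe _)]

lemma card_connectedComponent_le_card_sup_edge_add_one (u v : V) :
    Nat.card G.ConnectedComponent ≤ Nat.card (G ⊔ edge u v).ConnectedComponent + 1 := by
  by_cases huv : G.Reachable u v
  · rw [card_connectedComponent_sup_edge_of_reachable huv]; omega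
  · rw [card_connectedComponent_sup_edge_add_one huv]

lemma Reachable.of_card_connectedComponent_le {H : SimpleGraph V} (hle : G ≤ H)
    (hc : Nat.card G.ConnectedComponent ≤ Nat.card H.ConnectedComponent)
    (h : H.Reachable x y) : G.Reachable x y :=
  ConnectedComponent.exact
    (((ConnectedComponent.surjective_map_ofLE hle).bijective_of_nat_card_le hc).1
      (ConnectedComponent.sound h))

end Finite

end SimpleGraph

variable {V : Type*}

section Matching

variable {M N : SimpleGraph V} {v w : V}

lemma matchOf_adj (hM : ∀ v, ∃! w, M.Adj v w) (v : V) : M.Adj v (matchOf M v) := by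
  rw [matchOf, dif_pos (hM v).exists]
  exact (hM v).exists.choose_spec

lemma adj_iff_eq_matchOf (hM : ∀ v, ∃! w, M.Adj v w) : M.Adj v w ↔ w = matchOf M v :=
  ⟨fun h => (hM v).unique h (matchOf_adj hM v), fun h => h ▸ matchOf_adj hM v⟩

lemma matchOf_involutive (hM : ∀ v, ∃! w, M.Adj v w) : Function.Involutive (matchOf M) :=
  fun v => ((adj_iff_eq_matchOf hM).1 (matchOf_adj hM v).symm).symm

lemma matchOf_ne (hM : ∀ v, ∃! w, M.Adj v w) (v : V) : matchOf M v ≠ v :=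
  (matchOf_adj hM v).ne.symm

lemma matching_eq_of_le (hM : ∀ v, ∃! w, M.Adj v w) (hN : ∀ v, ∃! w, N.Adj v w)
    (h : M ≤ N) : M = N := by
  ext v w
  refine ⟨fun hvw => h hvw, fun hvw => ?_⟩
  obtain ⟨w', hw', -⟩ := hM v
  rwa [(hN v).unique hvw (h hw')]

lemma matching_reachable_iff (hM : ∀ v, ∃! w, M.Adj v w) :
    M.Reachable v w ↔ w = v ∨ M.Adj v w := by
  refine ⟨fun h => h.mem_of_forall_adj (S := {b | b = v ∨ M.Adj v b}) ?_ (Or.inl rfl), ?_⟩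
  · rintro a b hab (rfl | hva)
    · exact Or.inr hab
    · exact Or.inl ((hM a).unique hab hva.symm)
  · rintro (rfl | h)
    exacts [Reachable.refl _, h.reachable]

lemma even_card_of_matching_closed (hM : ∀ v, ∃! w, M.Adj v w)
    {s : Finset V} (hs : ∀ a b, M.Adj a b → a ∈ s → b ∈ s) : Even s.card := by
  have hperf : (⊤ : (M.induce (s : Set V)).Subgraph).IsPerfectMatching := by
    rw [Subgraph.isPerfectMatching_iff]
    rintro ⟨a, ha⟩
    obtain ⟨b, hab, hb⟩ := hM a
    exact ⟨⟨b, hs a b hab ha⟩, hab, fun c hac => Subtype.ext (hb c hac)⟩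
  simpa using hperf.even_card

end Matching

section Insertion

variable {M N : SimpleGraph V} {v₁ v₂ : V}

lemma insertEdge_adj (hM : ∀ v, ∃! w, M.Adj v w) (hv : v₁ ≠ v₂)
    (he : s(v₁, v₂) ∉ M.edgeSet) {a b : V} :
    (insertEdge M s(v₁, v₂)).Adj a b ↔
      (M.Adj a b ∧ a ≠ v₁ ∧ a ≠ v₂ ∧ b ≠ v₁ ∧ b ≠ v₂) ∨ s(a, b) = s(v₁, v₂) ∨
        s(a, b) = s(matchOf M v₁, matchOf M v₂) := by
  have h34 : matchOf M v₁ ≠ matchOf M v₂ := (matchOf_involutive hM).injective.ne hv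
  rw [insertEdge, if_neg he, fromEdgeSet_adj]
  have hne : ∀ {x y : V}, x ≠ y → s(a, b) = s(x, y) → a ≠ b := by
    rintro x y hxy h rfl
    exact hxy (by aesop)
  simp only [Set.mem_union, Set.mem_ofPred_eq, mem_edgeSet, Sym2.mem_iff, Set.mem_insert_iff,
    Set.mem_singleton_iff, Sym2.map_mk, forall_eq_or_imp, forall_eq, not_or]
  constructor
  · rintro ⟨⟨hab, ⟨h1, h2⟩, h3, h4⟩ | h | h, -⟩
    · exact Or.inl ⟨hab, Ne.symm h1, Ne.symm h3, Ne.symm h2, Ne.symm h4⟩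
    · exact Or.inr (Or.inl h)
    · exact Or.inr (Or.inr h)
  · rintro (⟨hab, h1, h2, h3, h4⟩ | h | h)
    · exact ⟨Or.inl ⟨hab, ⟨h1.symm, h3.symm⟩, h2.symm, h4.symm⟩, hab.ne⟩
    · exact ⟨Or.inr (Or.inl h), hne hv h⟩
    · exact ⟨Or.inr (Or.inr h), hne h34 h⟩

lemma insertEdge_adj_of_ne (hM : ∀ v, ∃! w, M.Adj v w) (hv : v₁ ≠ v₂)
    (he : s(v₁, v₂) ∉ M.edgeSet) {a : V} (h₁ : a ≠ v₁) (h₂ : a ≠ v₂)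
    (h₃ : a ≠ matchOf M v₁) (h₄ : a ≠ matchOf M v₂) :
    (insertEdge M s(v₁, v₂)).Adj a (matchOf M a) := by
  have hinv := matchOf_involutive hM
  refine (insertEdge_adj hM hv he).2 (Or.inl ⟨matchOf_adj hM a, h₁, h₂, ?_, ?_⟩)
  · exact fun h => h₃ (by rw [← h, hinv])
  · exact fun h => h₄ (by rw [← h, hinv])

lemma insertEdge_existsUnique_adj (hM : ∀ v, ∃! w, M.Adj v w) (hv : v₁ ≠ v₂)
    (he : s(v₁, v₂) ∉ M.edgeSet) (a : V) : ∃! b, (insertEdge M s(v₁, v₂)).Adj a b := by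
  have hinv : ∀ v, matchOf M (matchOf M v) = v := matchOf_involutive hM
  have h31 := matchOf_ne hM v₁
  have h42 := matchOf_ne hM v₂
  have h32 : matchOf M v₁ ≠ v₂ := fun h => he (h ▸ matchOf_adj hM v₁)
  have h41 : matchOf M v₂ ≠ v₁ := fun h => he (h ▸ (matchOf_adj hM v₂).symm)
  have h34 : matchOf M v₁ ≠ matchOf M v₂ := (matchOf_involutive hM).injective.ne hv
  suffices ∃ c, ∀ b, (insertEdge M s(v₁, v₂)).Adj a b ↔ b = c by
    obtain ⟨c, hc⟩ := this
    exact ⟨c, (hc c).2 rfl, fun b => (hc b).1⟩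
  simp only [insertEdge_adj hM hv he, adj_iff_eq_matchOf hM, Sym2.eq_iff]
  by_cases ha1 : a = v₁
  · exact ⟨v₂, fun b => by simp [ha1, hv, h31.symm, h41.symm]⟩
  by_cases ha2 : a = v₂
  · exact ⟨v₁, fun b => by simp [ha2, hv.symm, h32.symm, h42.symm]⟩
  by_cases ha3 : a = matchOf M v₁
  · exact ⟨matchOf M v₂, fun b => by aesop⟩
  by_cases ha4 : a = matchOf M v₂
  · exact ⟨matchOf M v₁, fun b => by aesop⟩
  have hb1 : matchOf M a ≠ v₁ := fun h => ha3 (by rw [← h, hinv])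
  have hb2 : matchOf M a ≠ v₂ := fun h => ha4 (by rw [← h, hinv])
  exact ⟨matchOf M a, fun b => by aesop⟩

lemma insertEdge_sup_edge_sup_edge (hM : ∀ v, ∃! w, M.Adj v w) (hv : v₁ ≠ v₂)
    (he : s(v₁, v₂) ∉ M.edgeSet) :
    insertEdge M s(v₁, v₂) ⊔ edge v₁ (matchOf M v₁) ⊔ edge v₂ (matchOf M v₂) =
      M ⊔ edge v₁ v₂ ⊔ edge (matchOf M v₁) (matchOf M v₂) := by
  refine le_antisymm (sup_le (sup_le ?_ ?_) ?_) (sup_le (sup_le ?_ ?_) ?_)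
  · intro a b hab
    rcases (insertEdge_adj hM hv he).1 hab with ⟨hab, -⟩ | h | h
    · exact Or.inl (Or.inl hab)
    · exact Or.inl (Or.inr ((adj_edge _ _).2 ⟨h.symm, hab.ne⟩))
    · exact Or.inr ((adj_edge _ _).2 ⟨h.symm, hab.ne⟩)
  · exact le_sup_of_le_left (le_sup_of_le_left ((edge_le_iff _).2 (Or.inr (matchOf_adj hM v₁))))
  · exact le_sup_of_le_left (le_sup_of_le_left ((edge_le_iff _).2 (Or.inr (matchOf_adj hM v₂))))
  · intro a b hab
    have hE : ∀ x, (edge x (matchOf M x)).Adj x (matchOf M x) := fun x =>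
      (edge_adj ..).2 ⟨Or.inl ⟨rfl, rfl⟩, (matchOf_ne hM x).symm⟩
    obtain rfl | ha1 := eq_or_ne a v₁
    · obtain rfl := (adj_iff_eq_matchOf hM).1 hab
      exact Or.inl (Or.inr (hE a))
    obtain rfl | ha2 := eq_or_ne a v₂
    · obtain rfl := (adj_iff_eq_matchOf hM).1 hab
      exact Or.inr (hE a)
    obtain rfl | hb1 := eq_or_ne b v₁
    · obtain rfl := (adj_iff_eq_matchOf hM).1 hab.symm
      exact Or.inl (Or.inr (hE b).symm)
    obtain rfl | hb2 := eq_or_ne b v₂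
    · obtain rfl := (adj_iff_eq_matchOf hM).1 hab.symm
      exact Or.inr (hE b).symm
    exact Or.inl (Or.inl ((insertEdge_adj hM hv he).2 (Or.inl ⟨hab, ha1, ha2, hb1, hb2⟩)))
  · refine le_sup_of_le_left (le_sup_of_le_left ((edge_le_iff _).2 (Or.inr ?_)))
    exact (insertEdge_adj hM hv he).2 (Or.inr (Or.inl rfl))
  · refine le_sup_of_le_left (le_sup_of_le_left ((edge_le_iff _).2 (Or.inr ?_)))
    exact (insertEdge_adj hM hv he).2 (Or.inr (Or.inr rfl))

lemma isCycleGraphOfLength_symmDiff_insertEdge (hM : ∀ v, ∃! w, M.Adj v w) (hv : v₁ ≠ v₂)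
    (he : s(v₁, v₂) ∉ M.edgeSet) :
    IsCycleGraphOfLength (symmDiff M (insertEdge M s(v₁, v₂))) 4 := by
  set M' := insertEdge M s(v₁, v₂)
  set v₃ := matchOf M v₁
  set v₄ := matchOf M v₂
  have hM' := insertEdge_existsUnique_adj hM hv he
  have h31 : v₃ ≠ v₁ := matchOf_ne hM v₁
  have h42 : v₄ ≠ v₂ := matchOf_ne hM v₂
  have h32 : v₃ ≠ v₂ := fun h => he (h ▸ matchOf_adj hM v₁)
  have h41 : v₄ ≠ v₁ := fun h => he (h ▸ (matchOf_adj hM v₂).symm)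
  have h34 : v₃ ≠ v₄ := (matchOf_involutive hM).injective.ne hv
  have h12' : M'.Adj v₁ v₂ := (insertEdge_adj hM hv he).2 (Or.inr (Or.inl rfl))
  have h34' : M'.Adj v₃ v₄ := (insertEdge_adj hM hv he).2 (Or.inr (Or.inr rfl))
  have hD₁ : (symmDiff M M').Adj v₁ v₂ := symmDiff_adj.2 (Or.inr ⟨h12', he⟩)
  have hD₂ : (symmDiff M M').Adj v₂ v₄ := symmDiff_adj.2 (Or.inl ⟨matchOf_adj hM v₂,
    fun h => h41 ((hM' v₂).unique h h12'.symm)⟩)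
  have hD₃ : (symmDiff M M').Adj v₄ v₃ := symmDiff_adj.2 (Or.inr ⟨h34'.symm,
    fun h => h32 ((hM v₄).unique h (matchOf_adj hM v₂).symm)⟩)
  have hD₄ : (symmDiff M M').Adj v₃ v₁ := symmDiff_adj.2 (Or.inl ⟨(matchOf_adj hM v₁).symm,
    fun h => h32 ((hM' v₁).unique h.symm h12')⟩)
  refine ⟨v₁, .cons hD₁ (.cons hD₂ (.cons hD₃ (.cons hD₄ .nil))), ?_, rfl, ?_⟩
  · simp [Walk.cons_isCycle_iff, Walk.cons_isPath_iff, hv, hv.symm, h31, h41, h31.symm, h32.symm,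
      h41.symm, h42.symm, h34.symm]
  · intro e
    induction e using Sym2.ind with | _ x y => ?_
    intro hxy
    rw [mem_edgeSet] at hxy
    simp only [Walk.edges_cons, Walk.edges_nil, List.mem_cons, List.not_mem_nil, or_false]
    rcases symmDiff_adj.1 hxy with ⟨hxyM, hxyM'⟩ | ⟨hxyM', hxyNM⟩
    · obtain rfl := (adj_iff_eq_matchOf hM).1 hxyM
      by_cases hx₁ : x = v₁
      · simp [hx₁, v₃, Sym2.eq_swap]
      by_cases hx₂ : x = v₂
      · simp [hx₂, v₄]
      by_cases hx₃ : x = v₃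
      · simp [hx₃, v₃, matchOf_involutive hM v₁]
      by_cases hx₄ : x = v₄
      · simp [hx₄, v₄, matchOf_involutive hM v₂, Sym2.eq_swap]
      exact absurd (insertEdge_adj_of_ne hM hv he hx₁ hx₂ hx₃ hx₄) hxyM'
    · rcases (insertEdge_adj hM hv he).1 hxyM' with ⟨hxyM, -⟩ | h | h
      · exact absurd hxyM hxyNM
      · simp [h]
      · simp [h, v₃, v₄, Sym2.eq_swap]

lemma card_connectedComponent_sup_sup_edge_eq (hM : ∀ v, ∃! w, M.Adj v w) (hv : v₁ ≠ v₂)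
    (he : s(v₁, v₂) ∉ M.edgeSet) :
    Nat.card (M ⊔ N ⊔ edge v₁ v₂).ConnectedComponent =
      Nat.card (insertEdge M s(v₁, v₂) ⊔ N ⊔ edge v₁ (matchOf M v₁)).ConnectedComponent := by
  have hM' (v : V) : (M ⊔ N).Reachable v (matchOf M v) := Adj.reachable (Or.inl (matchOf_adj hM v))
  have hI (a b : V) (h : (insertEdge M s(v₁, v₂)).Adj a b) :
      (insertEdge M s(v₁, v₂) ⊔ N).Reachable a b := Adj.reachable (Or.inl h)
  have hsup : M ⊔ N ⊔ edge v₁ v₂ ⊔ edge (matchOf M v₁) (matchOf M v₂) =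
      insertEdge M s(v₁, v₂) ⊔ N ⊔ edge v₁ (matchOf M v₁) ⊔ edge v₂ (matchOf M v₂) := by
    simp only [sup_right_comm _ N]
    rw [insertEdge_sup_edge_sup_edge hM hv he]
  rw [← card_connectedComponent_sup_edge_sup_edge (hM' v₁) (hM' v₂), hsup,
    card_connectedComponent_sup_edge_sup_edge
      (hI _ _ ((insertEdge_adj hM hv he).2 (Or.inr (Or.inl rfl))))
      (hI _ _ ((insertEdge_adj hM hv he).2 (Or.inr (Or.inr rfl))))]

section Finite

variable [Finite V]

lemma insertEdge_sup_reachable_matchOf_of_not_reachable (hM : ∀ v, ∃! w, M.Adj v w)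
    (hN : ∀ v, ∃! w, N.Adj v w) (hv : v₁ ≠ v₂) (he : s(v₁, v₂) ∉ M.edgeSet)
    (h : ¬(M ⊔ N).Reachable v₁ v₂) :
    (insertEdge M s(v₁, v₂) ⊔ N).Reachable v₁ (matchOf M v₁) := by
  classical
  have := Fintype.ofFinite V
  set G := M ⊔ N
  set G' := insertEdge M s(v₁, v₂) ⊔ N
  by_contra h₃
  set T := Finset.univ.filter fun y => G'.Reachable v₁ y ∧ G.Reachable v₁ y
  have hT : ∀ y, y ∈ T ↔ G'.Reachable v₁ y ∧ G.Reachable v₁ y := by simp [T]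
  have hv₁ : v₁ ∈ T := (hT v₁).2 ⟨.refl _, .refl _⟩
  have hN_even : Even T.card := by
    refine even_card_of_matching_closed hN fun a b hab haT => ?_
    obtain ⟨hG'a, hGa⟩ := (hT a).1 haT
    exact (hT b).2 ⟨hG'a.trans (Adj.reachable (Or.inr hab)), hGa.trans (Adj.reachable (Or.inr hab))⟩
  have hM_even : Even (T.erase v₁).card := by
    refine even_card_of_matching_closed hM fun a b hab ha => ?_
    obtain ⟨ha₁, haT⟩ := Finset.mem_erase.1 ha
    obtain ⟨hG'a, hGa⟩ := (hT a).1 haT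
    obtain rfl := (adj_iff_eq_matchOf hM).1 hab
    have ha₂ : a ≠ v₂ := by rintro rfl; exact h hGa
    have ha₃ : a ≠ matchOf M v₁ := by rintro rfl; exact h₃ hG'a
    have ha₄ : a ≠ matchOf M v₂ := by
      rintro rfl; exact h (hGa.trans (Adj.reachable (Or.inl (matchOf_adj hM v₂).symm)))
    have hadj' : G'.Adj a (matchOf M a) := Or.inl (insertEdge_adj_of_ne hM hv he ha₁ ha₂ ha₃ ha₄)
    refine Finset.mem_erase.2 ⟨fun h => ha₃ ?_, (hT _).2 ⟨hG'a.trans hadj'.reachable,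
      hGa.trans (Adj.reachable (Or.inl hab))⟩⟩
    rw [← h, matchOf_involutive hM]
  rw [Finset.card_erase_of_mem hv₁] at hM_even
  have := Finset.card_pos.2 ⟨v₁, hv₁⟩
  obtain ⟨r, hr⟩ := hN_even
  obtain ⟨s, hs⟩ := hM_even
  omega

lemma card_connectedComponent_insertEdge_sup_add_one (hM : ∀ v, ∃! w, M.Adj v w)
    (hN : ∀ v, ∃! w, N.Adj v w) (hv : v₁ ≠ v₂) (he : s(v₁, v₂) ∉ M.edgeSet)
    (h : ¬(M ⊔ N).Reachable v₁ v₂) :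
    Nat.card (insertEdge M s(v₁, v₂) ⊔ N).ConnectedComponent + 1 =
      Nat.card (M ⊔ N).ConnectedComponent := by
  rw [← card_connectedComponent_sup_edge_add_one h,
    card_connectedComponent_sup_sup_edge_eq hM hv he,
    card_connectedComponent_sup_edge_of_reachable
      (insertEdge_sup_reachable_matchOf_of_not_reachable hM hN hv he h)]

lemma card_connectedComponent_le_card_insertEdge_sup (hM : ∀ v, ∃! w, M.Adj v w)
    (hv : v₁ ≠ v₂) (he : s(v₁, v₂) ∉ M.edgeSet) (h : (M ⊔ N).Reachable v₁ v₂) :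
    Nat.card (M ⊔ N).ConnectedComponent ≤
      Nat.card (insertEdge M s(v₁, v₂) ⊔ N).ConnectedComponent := by
  rw [← card_connectedComponent_sup_edge_of_reachable h,
    card_connectedComponent_sup_sup_edge_eq hM hv he]
  exact ConnectedComponent.card_le_card_of_le le_sup_left

lemma card_connectedComponent_insertEdge_sup_le (hM : ∀ v, ∃! w, M.Adj v w)
    (hv : v₁ ≠ v₂) (he : s(v₁, v₂) ∉ M.edgeSet) :
    Nat.card (insertEdge M s(v₁, v₂) ⊔ N).ConnectedComponent ≤
      Nat.card (M ⊔ N).ConnectedComponent + 1 :=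
  calc _ ≤ Nat.card (insertEdge M s(v₁, v₂) ⊔ N ⊔ edge v₁ (matchOf M v₁)).ConnectedComponent + 1 :=
        card_connectedComponent_le_card_sup_edge_add_one _ _
    _ = Nat.card (M ⊔ N ⊔ edge v₁ v₂).ConnectedComponent + 1 := by
        rw [card_connectedComponent_sup_sup_edge_eq hM hv he]
    _ ≤ _ := by grw [ConnectedComponent.card_le_card_of_le le_sup_left]

lemma card_connectedComponent_insertEdge_sup_eq_add_one (hM : ∀ v, ∃! w, M.Adj v w)
    (hv : v₁ ≠ v₂) (he : s(v₁, v₂) ∉ M.edgeSet) (h : (M ⊔ N).Reachable v₁ v₂)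
    (h' : ¬(insertEdge M s(v₁, v₂) ⊔ N).Reachable v₁ (matchOf M v₁)) :
    Nat.card (insertEdge M s(v₁, v₂) ⊔ N).ConnectedComponent =
      Nat.card (M ⊔ N).ConnectedComponent + 1 := by
  rw [← card_connectedComponent_sup_edge_add_one h',
    ← card_connectedComponent_sup_sup_edge_eq hM hv he,
    card_connectedComponent_sup_edge_of_reachable h]

end Finite

end Insertion

lemma IsCycleGraphOfLength.exists_four {G : SimpleGraph V} (h : IsCycleGraphOfLength G 4) :
    ∃ a b c d, a ≠ c ∧ b ≠ d ∧ G.Adj a b ∧ G.Adj b c ∧ G.Adj c d ∧ G.Adj d a ∧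
      ∀ x y, G.Adj x y →
        s(x, y) = s(a, b) ∨ s(x, y) = s(b, c) ∨ s(x, y) = s(c, d) ∨ s(x, y) = s(d, a) := by
  obtain ⟨a, p, hp, hlen, hall⟩ := h
  obtain _ | ⟨hab, _ | ⟨hbc, _ | ⟨hcd, _ | ⟨hda, _ | ⟨_, _⟩⟩⟩⟩⟩ := p
  case cons.cons.cons.cons.nil =>
    have hnodup := hp.support_nodup
    simp only [Walk.support_cons, Walk.support_nil, List.tail_cons, List.nodup_cons,
      List.mem_cons, List.not_mem_nil] at hnodup
    refine ⟨_, _, _, _, by tauto, by tauto, hab, hbc, hcd, hda, fun x y hxy => ?_⟩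
    simpa using hall s(x, y) hxy
  all_goals simp at hlen

section Neighbours

variable {A B : SimpleGraph V}

lemma eq_insertEdge_of_symmDiff_four (hA : ∀ v, ∃! w, A.Adj v w)
    (hB : ∀ v, ∃! w, B.Adj v w) {a b c d : V} (hac : a ≠ c) (hbd : b ≠ d)
    (hbc : (symmDiff A B).Adj b c) (hcd : (symmDiff A B).Adj c d)
    (hda : (symmDiff A B).Adj d a)
    (hall : ∀ x y, (symmDiff A B).Adj x y →
      s(x, y) = s(a, b) ∨ s(x, y) = s(b, c) ∨ s(x, y) = s(c, d) ∨ s(x, y) = s(d, a))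
    (hab : A.Adj a b) :
    b ≠ c ∧ s(b, c) ∉ A.edgeSet ∧ B = insertEdge A s(b, c) := by
  have hbcA : ¬A.Adj b c := fun h => hac ((hA b).unique hab.symm h)
  have hbcB : B.Adj b c := by simpa [symmDiff_adj, hbcA] using hbc
  have hcdA : A.Adj c d := by
    have : ¬B.Adj c d := fun h => hbd ((hB c).unique hbcB.symm h)
    simpa [symmDiff_adj, this] using hcd
  have hdaA : ¬A.Adj d a := fun h => hbd ((hA a).unique hab h.symm)
  have hdaB : B.Adj d a := by simpa [symmDiff_adj, hdaA] using hda
  have hb : matchOf A b = a := ((adj_iff_eq_matchOf hA).1 hab.symm).symm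
  have hc : matchOf A c = d := ((adj_iff_eq_matchOf hA).1 hcdA).symm
  have he : s(b, c) ∉ A.edgeSet := hbcA
  refine ⟨hbcB.ne, he, (matching_eq_of_le (insertEdge_existsUnique_adj hA hbcB.ne he) hB ?_).symm⟩
  have hsym : ∀ {x y p q : V}, s(x, y) = s(p, q) → B.Adj p q → B.Adj x y := fun h hpq => by
    rwa [← mem_edgeSet, h]
  intro x y hxy
  rcases (insertEdge_adj hA hbcB.ne he).1 hxy with ⟨hxyA, hxb, hxc, hyb, hyc⟩ | h | h
  · by_contra hxyB
    rcases hall x y (symmDiff_adj.2 (Or.inl ⟨hxyA, hxyB⟩)) with h | h | h | h <;>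
      rw [Sym2.eq_iff] at h
    · tauto
    · tauto
    · tauto
    · rcases h with ⟨rfl, rfl⟩ | ⟨rfl, rfl⟩
      exacts [hdaA hxyA, hdaA hxyA.symm]
  · exact hsym h hbcB
  · rw [hb, hc] at h
    exact hsym h hdaB.symm

lemma exists_eq_insertEdge_of_isCycleGraphOfLength_symmDiff (hA : ∀ v, ∃! w, A.Adj v w)
    (hB : ∀ v, ∃! w, B.Adj v w) (h : IsCycleGraphOfLength (symmDiff A B) 4) :
    ∃ v₁ v₂, v₁ ≠ v₂ ∧ s(v₁, v₂) ∉ A.edgeSet ∧ B = insertEdge A s(v₁, v₂) := by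
  obtain ⟨a, b, c, d, hac, hbd, hab, hbc, hcd, hda, hall⟩ := h.exists_four
  by_cases habA : A.Adj a b
  · exact ⟨b, c, eq_insertEdge_of_symmDiff_four hA hB hac hbd hbc hcd hda hall habA⟩
  · -- then `bc` is an `A`-edge, so start the cycle at `b`
    have habB : B.Adj a b := by simpa [symmDiff_adj, habA] using hab
    have hbcA : A.Adj b c := by
      have : ¬B.Adj b c := fun h => hac ((hB b).unique habB.symm h)
      simpa [symmDiff_adj, this] using hbc
    refine ⟨c, d, eq_insertEdge_of_symmDiff_four hA hB hbd hac.symm hcd hda hab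
      (fun x y hxy => ?_) hbcA⟩
    rcases hall x y hxy with h | h | h | h <;> simp [h]

end Neighbours

lemma eq_of_card_connectedComponent_sup_le [Finite V] {X Y : SimpleGraph V}
    (hX : ∀ v, ∃! w, X.Adj v w) (hY : ∀ v, ∃! w, Y.Adj v w)
    (h : Nat.card Y.ConnectedComponent ≤ Nat.card (X ⊔ Y).ConnectedComponent) : X = Y := by
  refine matching_eq_of_le hX hY fun v w hvw => ?_
  have hreach : Y.Reachable v w :=
    (hvw.reachable.mono le_sup_left).of_card_connectedComponent_le le_sup_right h
  rcases (matching_reachable_iff hY).1 hreach with rfl | hY'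
  exacts [(hvw.ne rfl).elim, hY']

section MatchingGraph

variable {m : ℕ}

lemma card_connectedComponent_sup_le_of_adj {X X' : PMVertex m} (Y : PMVertex m)
    (h : (matchingGraph m).Adj X X') :
    Nat.card (X'.1 ⊔ Y.1).ConnectedComponent ≤ Nat.card (X.1 ⊔ Y.1).ConnectedComponent + 1 := by
  obtain ⟨v₁, v₂, hv, he, hX'⟩ :=
    exists_eq_insertEdge_of_isCycleGraphOfLength_symmDiff X.2 X'.2 h.2
  rw [hX']
  exact card_connectedComponent_insertEdge_sup_le X.2 hv he

lemma exists_adj_card_connectedComponent_sup_eq {X Y : PMVertex m} (hne : X ≠ Y) :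
    ∃ X', (matchingGraph m).Adj X X' ∧
      Nat.card (X'.1 ⊔ Y.1).ConnectedComponent = Nat.card (X.1 ⊔ Y.1).ConnectedComponent + 1 := by
  obtain ⟨v, hv⟩ : ∃ v, matchOf Y.1 v ≠ matchOf X.1 v := by
    by_contra! h
    refine hne (Subtype.ext (matching_eq_of_le X.2 Y.2 fun a b hab => ?_))
    rw [adj_iff_eq_matchOf X.2] at hab
    rw [adj_iff_eq_matchOf Y.2, hab, h]
  set w := matchOf Y.1 v
  have hvw : v ≠ w := (matchOf_ne Y.2 v).symm
  have he : s(v, w) ∉ X.1.edgeSet := fun h => hv ((adj_iff_eq_matchOf X.2).1 h)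
  have hX' := insertEdge_existsUnique_adj X.2 hvw he
  have hnew : (insertEdge X.1 s(v, w)).Adj v w :=
    (insertEdge_adj X.2 hvw he).2 (Or.inr (Or.inl rfl))
  refine ⟨⟨_, hX'⟩, ⟨fun h => he (h ▸ hnew), isCycleGraphOfLength_symmDiff_insertEdge X.2 hvw he⟩,
    card_connectedComponent_insertEdge_sup_eq_add_one X.2 hvw he
      (Adj.reachable (Or.inr (matchOf_adj Y.2 v))) fun h => ?_⟩
  have hclosed : ∀ a b, (insertEdge X.1 s(v, w) ⊔ Y.1).Adj a b →
      a ∈ ({v, w} : Set _) → b ∈ ({v, w} : Set _) := by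
    rintro a b (hab | hab) (rfl | rfl)
    · exact Or.inr ((hX' a).unique hab hnew)
    · exact Or.inl ((hX' w).unique hab hnew.symm)
    · exact Or.inr ((adj_iff_eq_matchOf Y.2).1 hab)
    · exact Or.inl ((Y.2 w).unique hab (matchOf_adj Y.2 v).symm)
  rcases h.mem_of_forall_adj hclosed (Or.inl rfl) with h | h
  exacts [matchOf_ne X.2 v h, hv h.symm]

lemma card_connectedComponent_le_length_add {X Y : PMVertex m} (p : (matchingGraph m).Walk X Y) :
    Nat.card Y.1.ConnectedComponent ≤ p.length + Nat.card (X.1 ⊔ Y.1).ConnectedComponent := by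
  induction p with
  | nil => simp
  | @cons _ _ Z h p ih =>
    have := card_connectedComponent_sup_le_of_adj Z h
    rw [Walk.length_cons]
    omega

lemma exists_walk_length_eq_of_card_connectedComponent_sup_add_eq (Y : PMVertex m) :
    ∀ (k : ℕ) (X : PMVertex m),
      Nat.card (X.1 ⊔ Y.1).ConnectedComponent + k = Nat.card Y.1.ConnectedComponent →
      ∃ p : (matchingGraph m).Walk X Y, p.length = k
  | 0, X, h => by
    obtain rfl : X = Y := Subtype.ext (eq_of_card_connectedComponent_sup_le X.2 Y.2 h.ge)
    exact ⟨.nil, rfl⟩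
  | k + 1, X, h => by
    have hne : X ≠ Y := by rintro rfl; simp at h
    obtain ⟨X', hadj, hX'⟩ := exists_adj_card_connectedComponent_sup_eq hne
    obtain ⟨p, hp⟩ :=
      exists_walk_length_eq_of_card_connectedComponent_sup_add_eq Y k X' (by omega)
    exact ⟨.cons hadj p, by rw [Walk.length_cons, hp]⟩

lemma dist_add_card_connectedComponent_sup (X Y : PMVertex m) :
    (matchingGraph m).dist X Y + Nat.card (X.1 ⊔ Y.1).ConnectedComponent =
      Nat.card Y.1.ConnectedComponent := by
  have hle : Nat.card (X.1 ⊔ Y.1).ConnectedComponent ≤ Nat.card Y.1.ConnectedComponent :=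
    ConnectedComponent.card_le_card_of_le le_sup_right
  obtain ⟨p, hp⟩ :=
    exists_walk_length_eq_of_card_connectedComponent_sup_add_eq Y _ X (Nat.add_sub_cancel' hle)
  obtain ⟨q, hq⟩ := p.reachable.exists_walk_length_eq_dist
  have := card_connectedComponent_le_length_add q
  have := hp ▸ dist_le p
  omega

end MatchingGraph

/-- Trichotomy for insertion: for perfect matchings `M₁, M₂` of `K_{2m}`, with
`l` components in `M₁ ∪ M₂`, and an edge `e = {v₁, v₂} ∉ M₁`:
(1) `d(M₁*e, M₂) = d(M₁,M₂) + 1` iff the endpoints of `e` lie in two different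
components of `M₁ ∪ M₂`;
(2) `d(M₁*e, M₂) = d(M₁,M₂) - 1` iff they lie in the same component and
`(M₁*e) ∪ M₂` has `l + 1` components;
(3) `d(M₁*e, M₂) = d(M₁,M₂)` iff they lie in the same component and
`(M₁*e) ∪ M₂` has `l` components. -/
theorem stmt10 (m : ℕ) (M₁ M₂ : PMVertex m) (v₁ v₂ : Fin (2 * m)) (hv : v₁ ≠ v₂)
    (he : s(v₁, v₂) ∉ M₁.1.edgeSet) (l : ℕ)
    (hl : l = Nat.card (M₁.1 ⊔ M₂.1).ConnectedComponent) :
    ∃ h : IsPerfMatching (insertEdge M₁.1 s(v₁, v₂)),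
      ((matchingGraph m).dist ⟨insertEdge M₁.1 s(v₁, v₂), h⟩ M₂ =
          (matchingGraph m).dist M₁ M₂ + 1 ↔
        ¬(M₁.1 ⊔ M₂.1).Reachable v₁ v₂) ∧
      ((matchingGraph m).dist M₁ M₂ =
          (matchingGraph m).dist ⟨insertEdge M₁.1 s(v₁, v₂), h⟩ M₂ + 1 ↔
        ((M₁.1 ⊔ M₂.1).Reachable v₁ v₂ ∧
          Nat.card (insertEdge M₁.1 s(v₁, v₂) ⊔ M₂.1).ConnectedComponent = l + 1)) ∧
      ((matchingGraph m).dist ⟨insertEdge M₁.1 s(v₁, v₂), h⟩ M₂ =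
          (matchingGraph m).dist M₁ M₂ ↔
        ((M₁.1 ⊔ M₂.1).Reachable v₁ v₂ ∧
          Nat.card (insertEdge M₁.1 s(v₁, v₂) ⊔ M₂.1).ConnectedComponent = l)) := by
  have h := insertEdge_existsUnique_adj M₁.2 hv he
  refine ⟨h, ?_⟩
  have hd := dist_add_card_connectedComponent_sup M₁ M₂
  have hd' : (matchingGraph m).dist ⟨_, h⟩ M₂ +
      Nat.card (insertEdge M₁.1 s(v₁, v₂) ⊔ M₂.1).ConnectedComponent =
        Nat.card M₂.1.ConnectedComponent :=
    dist_add_card_connectedComponent_sup ⟨_, h⟩ M₂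
  have hle := card_connectedComponent_insertEdge_sup_le M₁.2 hv he (N := M₂.1)
  subst hl
  by_cases hr : (M₁.1 ⊔ M₂.1).Reachable v₁ v₂
  · have hge := card_connectedComponent_le_card_insertEdge_sup M₁.2 hv he hr
    simp only [hr, not_true_eq_false, true_and, iff_false]
    refine ⟨by omega, ⟨?_, ?_⟩, ⟨?_, ?_⟩⟩ <;> intro <;> omega
  · have heq := card_connectedComponent_insertEdge_sup_add_one M₁.2 M₂.2 hv he hr
    simp only [hr, not_false_eq_true, false_and, iff_true, iff_false]
    refine ⟨?_, ?_, ?_⟩ <;> omega
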